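/- arXiv:1912.10297 — 2 statements merged into one kernel-verified Lean document; each statement's English description precedes it below -/
import Mathlib

section
/- Let n ≥ 2 and α₁, ..., αₙ ∈ ℝ/2πℤ be pairwise distinct. For each j (indices mod n) let θⱼ ∈ (0, 2π) be the unique lift of α_{j+1} − αⱼ. If θ₁ + ⋯ + θₙ = 2π, then (α₁, ..., αₙ) is in cyclic order in ℝ/2πℤ. -/
open Real

/-- Converse: if the lifts θⱼ ∈ (0, 2π) of the consecutive differences of
pairwise distinct α₁, …, αₙ ∈ ℝ/2πℤ sum to 2π, then (α₁, …, αₙ) is in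
strictly increasing cyclic order. -/
theorem stmt5 (n : ℕ) [NeZero n] (hn : 2 ≤ n)
    (α : Fin n → AddCircle (2 * π)) (hinj : Function.Injective α)
    (θ : Fin n → ℝ) (hθ : ∀ j, θ j ∈ Set.Ioo 0 (2 * π))
    (hlift : ∀ j, ((θ j : ℝ) : AddCircle (2 * π)) = α (j + 1) - α j)
    (hsum : ∑ j, θ j = 2 * π) :
    ∃ a : Fin n → ℝ,
      (∀ j, ((a j : ℝ) : AddCircle (2 * π)) = α j) ∧ StrictMono a ∧
        a ⟨n - 1, by omega⟩ < a ⟨0, by omega⟩ + 2 * π := by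
  obtain ⟨a₀, ha₀⟩ := Quotient.exists_rep (α 0)
  have npos : 0 < n := NeZero.pos n
  set θ' : ℕ → ℝ := fun i => θ ⟨i % n, Nat.mod_lt _ npos⟩ with hθ'
  set a : Fin n → ℝ := fun j => a₀ + ∑ i ∈ Finset.range j.1, θ' i with ha
  have hfin : ∀ m (h : m < n), (⟨m % n, Nat.mod_lt _ npos⟩ : Fin n) = ⟨m, h⟩ := by
    intro m h; exact Fin.ext (by simp [Nat.mod_eq_of_lt h])
  have hstep : ∀ m (h : m + 1 < n), a ⟨m + 1, h⟩ = a ⟨m, by omega⟩ + θ ⟨m, by omega⟩ := by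
    intro m h
    simp only [ha, Finset.sum_range_succ]
    rw [add_assoc]
    congr 1
    simp only [hθ']
    rw [hfin m (by omega)]
  have hlifta : ∀ m (h : m < n), ((a ⟨m, h⟩ : ℝ) : AddCircle (2 * π)) = α ⟨m, h⟩ := by
    intro m
    induction m with
    | zero =>
      intro h
      have : (⟨0, h⟩ : Fin n) = 0 := rfl
      simp [ha, this, ← ha₀]
    | succ m ih =>
      intro h
      have hm : m < n := by omega
      rw [hstep m h]
      rw [show ((a ⟨m, hm⟩ + θ ⟨m, hm⟩ : ℝ) : AddCircle (2 * π)) =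
        ((a ⟨m, hm⟩ : ℝ) : AddCircle (2 * π)) + ((θ ⟨m, hm⟩ : ℝ) : AddCircle (2 * π)) by
        norm_cast]
      rw [ih hm, hlift ⟨m, hm⟩, add_sub_cancel]
      congr 1
      apply Fin.ext
      simp [Fin.add_def, Nat.mod_eq_of_lt (show 1 < n by omega), Nat.mod_eq_of_lt h]
  have hmono : StrictMono a := by
    intro j k hjk
    simp only [ha]
    have hsub : Finset.range j.1 ⊆ Finset.range k.1 :=
      Finset.range_subset_range.mpr (le_of_lt hjk)
    have : ∑ i ∈ Finset.range j.1, θ' i < ∑ i ∈ Finset.range k.1, θ' i := by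
      apply Finset.sum_lt_sum_of_subset hsub (i := j.1) (by simp [Fin.lt_def.mp hjk]) (by simp)
      · exact (hθ _).1
      · intro i _ _; exact le_of_lt (hθ _).1
    linarith
  refine ⟨a, fun j => by simpa using hlifta j.1 j.2, hmono, ?_⟩
  have hsum' : ∑ i ∈ Finset.range n, θ' i = 2 * π := by
    rw [← hsum, Finset.sum_range fun i => θ' i]
    exact Finset.sum_congr rfl fun i _ => by simp only [hθ', hfin i.1 i.2]
  have h1 : n - 1 + 1 = n := by omega
  have : ∑ i ∈ Finset.range (n - 1), θ' i < 2 * π := by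
    rw [← hsum']
    calc ∑ i ∈ Finset.range (n - 1), θ' i
        < ∑ i ∈ Finset.range (n - 1), θ' i + θ' (n - 1) := by
          have : 0 < θ' (n - 1) := (hθ _).1
          linarith
      _ = ∑ i ∈ Finset.range n, θ' i := by
          rw [← Finset.sum_range_succ, h1]
  simp only [ha]
  simpa using this
end

section
/- Let α₁, α₂, α₃, α₄ ∈ ℝ/2πℤ be pairwise distinct and for i ≠ j let θ_{ij} ∈ (0, 2π) be the unique lift of αᵢ − αⱼ. Then θ₂₁ + θ₁₄ + θ₄₃ + θ₃₂ = 4π − 2π ≡ 2π (mod 4π) holds, i.e. 4π − (θ₂₁ + θ₁₄ + θ₄₃ + θ₃₂) is an odd multiple of 2π, if and only if the cyclic order of (α₁, α₂, α₃, α₄) is [α₁, α₂, α₃, α₄] or [α₁, α₄, α₃, α₂]. -/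
open Real

/-- Four elements of ℝ/2πℤ are in (strictly increasing) cyclic order
[a, b, c, d] if they admit lifts x < y < z < w < x + 2π. -/
def Cyc4 (a b c d : AddCircle (2 * π)) : Prop :=
  ∃ x y z w : ℝ,
    ((x : ℝ) : AddCircle (2 * π)) = a ∧ ((y : ℝ) : AddCircle (2 * π)) = b ∧
    ((z : ℝ) : AddCircle (2 * π)) = c ∧ ((w : ℝ) : AddCircle (2 * π)) = d ∧
    x < y ∧ y < z ∧ z < w ∧ w < x + 2 * π

private lemma coe_eq_iff' {u v : ℝ} :
    ((u : ℝ) : AddCircle (2 * π)) = ((v : ℝ) : AddCircle (2 * π)) ↔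
      ∃ k : ℤ, u = v + 2 * π * k := by
  rw [show ((u : ℝ) : AddCircle (2 * π)) = v ↔ ((u - v : ℝ) : AddCircle (2 * π)) = 0 by
    rw [AddCircle.coe_sub, sub_eq_zero], AddCircle.coe_eq_zero_iff]
  constructor
  · rintro ⟨k, hk⟩
    exact ⟨k, by rw [zsmul_eq_mul] at hk; linarith⟩
  · rintro ⟨k, rfl⟩
    exact ⟨k, by rw [zsmul_eq_mul]; ring⟩

/-- If two reals have the same image in ℝ/2πℤ and their difference is within
2π of `2πm`, then they differ by exactly `2πm`. -/
private lemma diff_pin {u v : ℝ} (m : ℤ)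
    (h : ((u : ℝ) : AddCircle (2 * π)) = ((v : ℝ) : AddCircle (2 * π)))
    (h1 : 2 * π * ((m : ℝ) - 1) < u - v) (h2 : u - v < 2 * π * ((m : ℝ) + 1)) :
    u = v + 2 * π * m := by
  obtain ⟨k, hk⟩ := coe_eq_iff'.mp h
  have hπ := Real.pi_pos
  have hd : u - v = 2 * π * k := by linarith
  rw [hd] at h1 h2
  have e1 : ((m : ℝ) - 1) < k := by nlinarith
  have e2 : (k : ℝ) < (m : ℝ) + 1 := by nlinarith
  have e1' : m - 1 < k := by exact_mod_cast e1
  have e2' : k < m + 1 := by exact_mod_cast e2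
  have : k = m := by omega
  rw [hk, this]

set_option maxHeartbeats 1600000 in
/-- The cone angle 4π − (θ₂₁ + θ₁₄ + θ₄₃ + θ₃₂) at a quadrilateral face is an
odd multiple of 2π iff the four pairwise distinct angles are cyclically
ordered as [α₁, α₂, α₃, α₄] or as [α₁, α₄, α₃, α₂]. -/
theorem stmt12 (α₁ α₂ α₃ α₄ : AddCircle (2 * π))
    (hdist : α₁ ≠ α₂ ∧ α₁ ≠ α₃ ∧ α₁ ≠ α₄ ∧ α₂ ≠ α₃ ∧ α₂ ≠ α₄ ∧ α₃ ≠ α₄)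
    (θ21 θ14 θ43 θ32 : ℝ)
    (h21 : θ21 ∈ Set.Ioo 0 (2 * π)) (l21 : ((θ21 : ℝ) : AddCircle (2 * π)) = α₂ - α₁)
    (h14 : θ14 ∈ Set.Ioo 0 (2 * π)) (l14 : ((θ14 : ℝ) : AddCircle (2 * π)) = α₁ - α₄)
    (h43 : θ43 ∈ Set.Ioo 0 (2 * π)) (l43 : ((θ43 : ℝ) : AddCircle (2 * π)) = α₄ - α₃)
    (h32 : θ32 ∈ Set.Ioo 0 (2 * π)) (l32 : ((θ32 : ℝ) : AddCircle (2 * π)) = α₃ - α₂) :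
    (∃ n : ℤ, 4 * π - (θ21 + θ14 + θ43 + θ32) = 2 * π * (2 * n + 1)) ↔
      (Cyc4 α₁ α₂ α₃ α₄ ∨ Cyc4 α₁ α₄ α₃ α₂) := by
  have hπ := Real.pi_pos
  obtain ⟨t21a, t21b⟩ := h21
  obtain ⟨t14a, t14b⟩ := h14
  obtain ⟨t43a, t43b⟩ := h43
  obtain ⟨t32a, t32b⟩ := h32
  constructor
  · rintro ⟨n, hn⟩
    -- lift of α₁
    obtain ⟨a1, ha1⟩ : ∃ x : ℝ, ((x : ℝ) : AddCircle (2 * π)) = α₁ :=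
      QuotientAddGroup.mk_surjective α₁
    -- lift of α₄ - α₁ in (0, 2π)
    have lb4 : ((2 * π - θ14 : ℝ) : AddCircle (2 * π)) = α₄ - α₁ := by
      rw [AddCircle.coe_sub, l14, show ((2*π : ℝ) : AddCircle (2*π)) = 0 from AddCircle.coe_period _]; abel
    -- lift of α₃ - α₁ in (0, 2π)
    have lc : ((θ32 + θ21 : ℝ) : AddCircle (2 * π)) = α₃ - α₁ := by
      rw [AddCircle.coe_add, l32, l21]; abel
    have hcne : θ32 + θ21 ≠ 2 * π := by
      intro h
      apply hdist.2.1
      have h0 : ((θ32 + θ21 : ℝ) : AddCircle (2 * π)) = 0 := by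
        rw [h]; exact AddCircle.coe_period _
      rw [lc] at h0
      exact (sub_eq_zero.mp h0).symm
    obtain ⟨b₃, hb₃a, hb₃b, lb3⟩ :
        ∃ b₃ : ℝ, 0 < b₃ ∧ b₃ < 2 * π ∧ ((b₃ : ℝ) : AddCircle (2 * π)) = α₃ - α₁ := by
      by_cases hc : θ32 + θ21 < 2 * π
      · exact ⟨θ32 + θ21, by linarith, hc, lc⟩
      · have hgt : 2 * π < θ32 + θ21 := lt_of_le_of_ne (not_lt.mp hc) (Ne.symm hcne)
        refine ⟨θ32 + θ21 - 2 * π, by linarith, by linarith, ?_⟩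
        rw [AddCircle.coe_sub, show ((2*π : ℝ) : AddCircle (2*π)) = 0 from AddCircle.coe_period _, sub_zero, lc]
    -- congruences for θ32 and θ43 in terms of lifts
    have c32 : ((θ32 : ℝ) : AddCircle (2 * π)) = ((b₃ - θ21 : ℝ) : AddCircle (2 * π)) := by
      rw [AddCircle.coe_sub, lb3, l21, l32]; abel
    have c43 : ((θ43 : ℝ) : AddCircle (2 * π)) =
        (((2 * π - θ14) - b₃ : ℝ) : AddCircle (2 * π)) := by
      rw [AddCircle.coe_sub, lb4, lb3, l43]; abel
    obtain ⟨k32, hk32⟩ := coe_eq_iff'.mp c32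
    obtain ⟨k43, hk43⟩ := coe_eq_iff'.mp c43
    -- each k is 0 or 1
    have hk32r1 : (-1 : ℝ) < k32 := by nlinarith
    have hk32r2 : (k32 : ℝ) < 2 := by nlinarith
    have hk43r1 : (-1 : ℝ) < k43 := by nlinarith
    have hk43r2 : (k43 : ℝ) < 2 := by nlinarith
    have hk32i1 : (-1 : ℤ) < k32 := by exact_mod_cast hk32r1
    have hk32i2 : k32 < 2 := by exact_mod_cast hk32r2
    have hk43i1 : (-1 : ℤ) < k43 := by exact_mod_cast hk43r1
    have hk43i2 : k43 < 2 := by exact_mod_cast hk43r2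
    -- the sum identity forces k32 + k43 = -2n (even)
    have hsum0 : 2 * π * ((k32 : ℝ) + (k43 : ℝ) + 2 * (n : ℝ)) = 0 := by
      linear_combination -hn - hk32 - hk43
    have hsum1 : (k32 : ℝ) + (k43 : ℝ) + 2 * (n : ℝ) = 0 := by
      rcases mul_eq_zero.mp hsum0 with h | h
      · nlinarith
      · exact h
    have hsumZ : k32 + k43 + 2 * n = 0 := by exact_mod_cast hsum1
    have hkk : (k32 = 0 ∧ k43 = 0) ∨ (k32 = 1 ∧ k43 = 1) := by omega
    rcases hkk with ⟨e32, e43⟩ | ⟨e32, e43⟩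
    · -- θ21 < b₃ < 2π - θ14 : order [α₁, α₂, α₃, α₄]
      rw [e32] at hk32; rw [e43] at hk43
      push_cast at hk32 hk43
      have o1 : θ21 < b₃ := by nlinarith
      have o2 : b₃ < 2 * π - θ14 := by nlinarith
      left
      refine ⟨a1, a1 + θ21, a1 + b₃, a1 + (2 * π - θ14), ha1, ?_, ?_, ?_, by linarith,
        by linarith, by linarith, by linarith⟩
      · rw [AddCircle.coe_add, ha1, l21]; abel
      · rw [AddCircle.coe_add, ha1, lb3]; abel
      · rw [AddCircle.coe_add, ha1, lb4]; abel
    · -- 2π - θ14 < b₃ < θ21 : order [α₁, α₄, α₃, α₂]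
      rw [e32] at hk32; rw [e43] at hk43
      push_cast at hk32 hk43
      have o1 : 2 * π - θ14 < b₃ := by nlinarith
      have o2 : b₃ < θ21 := by nlinarith
      right
      refine ⟨a1, a1 + (2 * π - θ14), a1 + b₃, a1 + θ21, ha1, ?_, ?_, ?_, by linarith,
        by linarith, by linarith, by linarith⟩
      · rw [AddCircle.coe_add, ha1, lb4]; abel
      · rw [AddCircle.coe_add, ha1, lb3]; abel
      · rw [AddCircle.coe_add, ha1, l21]; abel
  · rintro (⟨x, y, z, w, hx, hy, hz, hw, o1, o2, o3, o4⟩ |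
            ⟨x, y, z, w, hx, hy, hz, hw, o1, o2, o3, o4⟩)
    · -- x↦α₁, y↦α₂, z↦α₃, w↦α₄; sum = 2π, n = 0
      have e21 : θ21 = (y - x) + 2 * π * ((0 : ℤ) : ℝ) := by
        refine diff_pin 0 ?_ (by push_cast; linarith) (by push_cast; linarith)
        rw [AddCircle.coe_sub, hx, hy, l21]
      have e14 : θ14 = (x - w) + 2 * π * ((1 : ℤ) : ℝ) := by
        refine diff_pin 1 ?_ (by push_cast; linarith) (by push_cast; linarith)
        rw [AddCircle.coe_sub, hx, hw, l14]
      have e43 : θ43 = (w - z) + 2 * π * ((0 : ℤ) : ℝ) := by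
        refine diff_pin 0 ?_ (by push_cast; linarith) (by push_cast; linarith)
        rw [AddCircle.coe_sub, hw, hz, l43]
      have e32 : θ32 = (z - y) + 2 * π * ((0 : ℤ) : ℝ) := by
        refine diff_pin 0 ?_ (by push_cast; linarith) (by push_cast; linarith)
        rw [AddCircle.coe_sub, hz, hy, l32]
      refine ⟨0, ?_⟩
      push_cast at e21 e14 e43 e32 ⊢
      linarith
    · -- x↦α₁, y↦α₄, z↦α₃, w↦α₂; sum = 6π, n = -1
      have e21 : θ21 = (w - x) + 2 * π * ((0 : ℤ) : ℝ) := by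
        refine diff_pin 0 ?_ (by push_cast; linarith) (by push_cast; linarith)
        rw [AddCircle.coe_sub, hw, hx, l21]
      have e14 : θ14 = (x - y) + 2 * π * ((1 : ℤ) : ℝ) := by
        refine diff_pin 1 ?_ (by push_cast; linarith) (by push_cast; linarith)
        rw [AddCircle.coe_sub, hx, hy, l14]
      have e43 : θ43 = (y - z) + 2 * π * ((1 : ℤ) : ℝ) := by
        refine diff_pin 1 ?_ (by push_cast; linarith) (by push_cast; linarith)
        rw [AddCircle.coe_sub, hy, hz, l43]
      have e32 : θ32 = (z - w) + 2 * π * ((1 : ℤ) : ℝ) := by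
        refine diff_pin 1 ?_ (by push_cast; linarith) (by push_cast; linarith)
        rw [AddCircle.coe_sub, hz, hw, l32]
      refine ⟨-1, ?_⟩
      push_cast at e21 e14 e43 e32 ⊢
      linarith
end
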